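/- Let G be a finite p-solvable group. Then the 𝒰_p-residual of N_{𝒰_p}(G) is a p-group. -/

import Mathlib

universe u

/-- A class of groups (a property of groups) in universe `u`. -/
abbrev GroupClass : Type (u + 1) := ∀ (H : Type u) [Group H], Prop

/-- A (finite) normal chain of `G`: a monotone chain of subgroups running from `⊥`
to `⊤`, all of whose terms are normal in `G`. -/
structure NormalChain (G : Type u) [Group G] : Type u where
  len : ℕ
  ser : Fin (len + 1) → Subgroup G
  mono : Monotone ser
  bot_eq : ser 0 = ⊥
  top_eq : ser (Fin.last len) = ⊤
  normal : ∀ i, (ser i).Normal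

namespace NormalChain

variable {G : Type u} [Group G] (S : NormalChain G)

/-- The order of the `i`-th factor `S.ser i.succ / S.ser i.castSucc` of the chain. -/
noncomputable def factorCard (i : Fin S.len) : ℕ :=
  (S.ser i.castSucc).relIndex (S.ser i.succ)

/-- The `i`-th factor of the chain (realized as the image of `S.ser i.succ` in
`G ⧸ S.ser i.castSucc`) satisfies the group property `P`. -/
def FactorProp (P : GroupClass.{u}) (i : Fin S.len) : Prop :=
  letI := S.normal i.castSucc
  P ↥(Subgroup.map (QuotientGroup.mk' (S.ser i.castSucc)) (S.ser i.succ))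

end NormalChain

/-- A finite group is `p`-nilpotent if it has a normal `p`-complement. -/
def IsPNilpotentGrp (p : ℕ) (G : Type u) [Group G] : Prop :=
  ∃ N : Subgroup G, N.Normal ∧ ¬ p ∣ Nat.card N ∧ ∃ k : ℕ, N.index = p ^ k

/-- A group is supersolvable if it has a normal series with cyclic factors. -/
def IsSupersolvableGrp (G : Type u) [Group G] : Prop :=
  ∃ S : NormalChain G, ∀ i, S.FactorProp (fun H inst => letI := inst; IsCyclic H) i

/-- A group is `p`-solvable if it has a normal series each of whose factors is a
`p`-group or a `p'`-group. -/
def IsPSolvableGrp (p : ℕ) (G : Type u) [Group G] : Prop :=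
  ∃ S : NormalChain G, ∀ i, (∃ k : ℕ, S.factorCard i = p ^ k) ∨ ¬ p ∣ S.factorCard i

/-- `N < M` is a chief factor of `G`: both are normal in `G` and no normal subgroup of
`G` lies strictly between them. -/
def IsChiefFactorOf (G : Type u) [Group G] (N M : Subgroup G) : Prop :=
  N.Normal ∧ M.Normal ∧ N < M ∧
    ∀ K : Subgroup G, K.Normal → N ≤ K → K ≤ M → K = N ∨ K = M

/-- A group is `p`-supersolvable if it is `p`-solvable and all its chief factors of
order divisible by `p` are (cyclic) of order `p`. -/
def IsPSupersolvableGrp (p : ℕ) (G : Type u) [Group G] : Prop :=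
  IsPSolvableGrp p G ∧
    ∀ N M : Subgroup G, IsChiefFactorOf G N M →
      p ∣ N.relIndex M → N.relIndex M = p

/-- The formation of supersolvable groups, as a class of groups. -/
def supersolvableClass : GroupClass.{u} := fun H inst => @IsSupersolvableGrp H inst

/-- The formation of `p`-supersolvable groups, as a class of groups. -/
def pSupersolvableClass (p : ℕ) : GroupClass.{u} := fun H inst => @IsPSupersolvableGrp p H inst

/-- `N` is normal in `G` with `G ⧸ N` in the class `C`. -/
def QuotientInClass (C : GroupClass.{u}) {G : Type u} [Group G] (N : Subgroup G) : Prop :=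
  ∃ _h : N.Normal, letI := _h; C (G ⧸ N)

/-- The `C`-residual `G^C` of `G`: the intersection of all normal subgroups of `G`
whose quotient lies in `C`. -/
def groupResidual (C : GroupClass.{u}) (G : Type u) [Group G] : Subgroup G :=
  sInf {N : Subgroup G | QuotientInClass C N}

/-- The `C`-residual `T^C` of a subgroup `T` of `G`, viewed as a subgroup of `G`. -/
def residualIn (C : GroupClass.{u}) {G : Type u} [Group G] (T : Subgroup G) : Subgroup G :=
  Subgroup.map T.subtype (groupResidual C ↥T)

/-- The weak norm `N_C(G, H) = ⋂_{T ≤ H} N_G(T^C)` of `H` in `G` with respect to `C`. -/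
def weakNorm (C : GroupClass.{u}) {G : Type u} [Group G] (H : Subgroup G) : Subgroup G :=
  ⨅ (T : Subgroup G) (_ : T ≤ H), Subgroup.normalizer (residualIn C T : Set G)

/-- The norm `N_C(G) = N_C(G, G)` of `G` with respect to `C`. -/
def grpNorm (C : GroupClass.{u}) (G : Type u) [Group G] : Subgroup G :=
  weakNorm C (⊤ : Subgroup G)

/-- `s` is the upper `C`-norm series of `G`: `s 0 = ⊥` and
`s (i+1) / s i = N_C(G / s i)`. -/
def IsUpperNormSeries (C : GroupClass.{u}) (G : Type u) [Group G]
    (s : ℕ → Subgroup G) : Prop :=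
  s 0 = ⊥ ∧ ∀ i : ℕ, ∃ h : (s i).Normal,
    s (i + 1) =
      (letI := h; Subgroup.comap (QuotientGroup.mk' (s i)) (grpNorm C (G ⧸ s i)))

/-- The hypercenter of a group: the terminal term of the upper central series. -/
def hyperCenter (G : Type u) [Group G] : Subgroup G :=
  ⨆ n : ℕ, upperCentralSeries G n

/-- The `p`-Fitting length of `G`: the length of a shortest normal chain of `G`
all of whose factors are `p`-nilpotent. -/
noncomputable def pFittingLength (p : ℕ) (G : Type u) [Group G] : ℕ :=
  sInf {n : ℕ | ∃ S : NormalChain G, S.len = n ∧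
    ∀ i, S.FactorProp (fun H inst => @IsPNilpotentGrp p H inst) i}

/-- The Fitting length of `G`: the length of a shortest normal chain of `G`
all of whose factors are nilpotent. -/
noncomputable def fittingLength (G : Type u) [Group G] : ℕ :=
  sInf {n : ℕ | ∃ S : NormalChain G, S.len = n ∧
    ∀ i, S.FactorProp (fun H inst => @Group.IsNilpotent H inst) i}

/-- The `p`-length of `G`: the least number of `p`-factors in a normal chain of `G`
each of whose factors is a `p`-group or a `p'`-group. -/
noncomputable def pLength (p : ℕ) (G : Type u) [Group G] : ℕ :=
  sInf {n : ℕ | ∃ S : NormalChain G,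
    (∀ i, (∃ k : ℕ, S.factorCard i = p ^ k) ∨ ¬ p ∣ S.factorCard i) ∧
    Nat.card {i : Fin S.len // p ∣ S.factorCard i} ≤ n}

/-!
Since `D = N_{𝒰_p}(G)` normalizes `T^{𝒰_p}` for every `T ≤ G`, every `S ≤ D` has `S^{𝒰_p}`
normal in `D`. So it suffices to show: if `X` is `p`-solvable and the residual of every
subgroup is normal in `X`, then `R = X^{𝒰_p}` is a `p`-group. This hypothesis passes to
quotients, so by induction on `|X|`, `R` is a `p`-group modulo every nontrivial normal subgroup.
Let `N` be a minimal normal subgroup; it is a `p`-group or a `p'`-group. If `N` is a `p`-group,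
or if there is a second minimal normal subgroup `L` (so that `N ∩ L = 1`), then `R` is a
`p`-group.

Otherwise `N` is the unique minimal normal subgroup and a `p'`-group, and it suffices to show
`X/N ∈ 𝒰_p`: a normal `p'`-subgroup is invisible to the chief factors of order divisible by
`p`, so then `X ∈ 𝒰_p` and `R = 1`. Since `R/N` is a `p`-group, `R = NP` for a Sylow
`p`-subgroup `P` of `R`, and the Frattini argument gives `X = N N_X(P)`. If `P ⊴ X` then
`P = 1` (else `N ≤ P`), so `R = N`. Otherwise `M = N_X(P)` is proper with `NM = X`; its
residual is normal in `X` and does not contain `N`, hence is trivial, and `X/N` is a quotient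
of the `p`-supersolvable group `M`.
-/

open Subgroup Pointwise

section SubgroupLattice

variable {G : Type*} [Group G]

-- Dedekind's modular law; the hypothesis holds as soon as `A` or `N` is normal.
theorem Subgroup.sup_inf_assoc_of_coe_sup {A N B : Subgroup G} (hAB : A ≤ B)
    (hAN : ((A ⊔ N : Subgroup G) : Set G) = (A : Set G) * (N : Set G)) :
    (A ⊔ N) ⊓ B = A ⊔ N ⊓ B := by
  refine le_antisymm (fun g hg => ?_)
    (sup_le (le_inf le_sup_left hAB) (inf_le_inf_right B le_sup_right))
  have hg' : g ∈ (A : Set G) * ↑(N ⊓ B) := by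
    rw [mul_inf_assoc A N B hAB, ← hAN]
    exact hg
  obtain ⟨a, ha, n, hn, rfl⟩ := hg'
  exact mul_mem (mem_sup_left ha) (mem_sup_right hn)

theorem Subgroup.relIndex_dvd_relIndex_of_le_right {A K L : Subgroup G} [A.Normal]
    (hKL : K ≤ L) : A.relIndex K ∣ A.relIndex L := by
  rw [← relIndex_sup_right K A, ← relIndex_sup_right L A]
  exact Dvd.intro _ (relIndex_mul_relIndex A _ _ le_sup_right (sup_le_sup_right hKL A))

theorem Subgroup.relIndex_sup_sup_dvd {A B K : Subgroup G} [A.Normal] [K.Normal]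
    (hAB : A ≤ B) : (A ⊔ K).relIndex (B ⊔ K) ∣ A.relIndex B := by
  rw [show B ⊔ K = B ⊔ (A ⊔ K) by rw [← sup_assoc, sup_eq_left.2 hAB], relIndex_sup_right]
  exact relIndex_dvd_of_le_left B le_sup_left

theorem Subgroup.relIndex_sup_sup_of_inf_le {A B K : Subgroup G} [A.Normal] [K.Normal]
    (hAB : A ≤ B) (hKB : K ⊓ B ≤ A) : (A ⊔ K).relIndex (B ⊔ K) = A.relIndex B := by
  rw [show B ⊔ K = B ⊔ (A ⊔ K) by rw [← sup_assoc, sup_eq_left.2 hAB], relIndex_sup_right,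
    ← inf_relIndex_right, sup_inf_assoc_of_coe_sup hAB (mul_normal A K), sup_eq_left.2 hKB]

theorem Subgroup.relIndex_inf_inf_of_sup_eq {A B K : Subgroup G} [A.Normal] (hAB : A ≤ B)
    (h : A ⊔ K ⊓ B = B) : (K ⊓ A).relIndex (K ⊓ B) = A.relIndex B := by
  rw [show K ⊓ A = A ⊓ (K ⊓ B) by rw [inf_left_comm, inf_eq_left.2 hAB, inf_comm],
    inf_relIndex_right, ← relIndex_sup_right (K ⊓ B) A, sup_comm, h]

theorem Subgroup.card_dvd_relIndex_of_inf_eq_bot {A B N : Subgroup G} [A.Normal] (hAB : A ≤ B)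
    (hNB : N ≤ B) (h : A ⊓ N = ⊥) : Nat.card N ∣ A.relIndex B :=
  calc Nat.card N = A.relIndex (N ⊔ A) := by
        rw [relIndex_sup_right, ← inf_relIndex_right, h, relIndex_bot_left]
    _ ∣ A.relIndex B := Dvd.intro _ (relIndex_mul_relIndex _ _ _ le_sup_right (sup_le hNB hAB))

end SubgroupLattice

namespace IsChiefFactorOf

variable {X Y : Type u} [Group X] [Group Y] {A B : Subgroup X}

theorem le (hc : IsChiefFactorOf X A B) : A ≤ B := hc.2.2.1.le

theorem comap_of_surjective {A B : Subgroup Y} (hc : IsChiefFactorOf Y A B) {f : X →* Y}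
    (hf : Function.Surjective f) : IsChiefFactorOf X (A.comap f) (B.comap f) := by
  obtain ⟨hA, hB, hlt, hmax⟩ := hc
  refine ⟨hA.comap f, hB.comap f, (comap_lt_comap_of_surjective hf).2 hlt,
    fun K hK hAK hKB => ?_⟩
  rcases hmax (K.map f) (hK.map f hf) ((map_comap_eq_self_of_surjective hf A).symm.trans_le
      (map_mono hAK)) (map_le_iff_le_comap.2 hKB) with h | h <;>
    [left; right] <;>
    rw [← h, comap_map_eq_self ((ker_le_comap f A).trans hAK)]

theorem map_of_surjective (hc : IsChiefFactorOf X A B) {f : X →* Y}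
    (hf : Function.Surjective f) (hker : f.ker ≤ A) :
    IsChiefFactorOf Y (A.map f) (B.map f) := by
  obtain ⟨hA, hB, hlt, hmax⟩ := hc
  have hcA := comap_map_eq_self hker
  have hcB := comap_map_eq_self (hker.trans hlt.le)
  refine ⟨hA.map f hf, hB.map f hf,
    lt_of_le_of_ne (map_mono hlt.le) fun h => hlt.ne (by rw [← hcA, ← hcB, h]),
    fun L hL hAL hLB => ?_⟩
  rcases hmax (L.comap f) (hL.comap f) (hcA ▸ comap_mono hAL) (hcB ▸ comap_mono hLB)
    with h | h <;>
    [left; right] <;>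
    rw [← h, map_comap_eq_self_of_surjective hf]

theorem sup (hc : IsChiefFactorOf X A B) {K : Subgroup X} [K.Normal] (hKB : K ⊓ B ≤ A) :
    IsChiefFactorOf X (A ⊔ K) (B ⊔ K) := by
  obtain ⟨hA, hB, hlt, hmax⟩ := hc
  have hAKB : (A ⊔ K) ⊓ B = A := by
    rw [sup_inf_assoc_of_coe_sup hlt.le (mul_normal A K), sup_eq_left.2 hKB]
  refine ⟨sup_normal A K, sup_normal B K, lt_of_le_of_ne (sup_le_sup_right hlt.le K)
    fun h => hlt.ne' (le_antisymm (hAKB ▸ h ▸ le_inf le_sup_left le_rfl) hlt.le),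
    fun L hL hAL hLB => ?_⟩
  have hKL : K ≤ L := le_sup_right.trans hAL
  have hL' : L = L ⊓ B ⊔ K :=
    calc L = (K ⊔ B) ⊓ L := (inf_eq_right.2 (sup_comm K B ▸ hLB)).symm
      _ = K ⊔ B ⊓ L := sup_inf_assoc_of_coe_sup hKL (normal_mul K B)
      _ = L ⊓ B ⊔ K := by rw [sup_comm, inf_comm]
  rcases hmax (L ⊓ B) (normal_inf_normal L B) (le_inf (le_sup_left.trans hAL) hlt.le)
      inf_le_right with h | h <;>
    [left; right] <;>
    rw [hL', h]

theorem inf (hc : IsChiefFactorOf X A B) {K : Subgroup X} [K.Normal] (h : A ⊔ K ⊓ B = B) :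
    IsChiefFactorOf X (K ⊓ A) (K ⊓ B) := by
  obtain ⟨hA, hB, hlt, hmax⟩ := hc
  refine ⟨normal_inf_normal K A, normal_inf_normal K B, lt_of_le_of_ne
    (inf_le_inf_left K hlt.le) fun hKAB => hlt.ne' ?_, fun E hE hAE hEB => ?_⟩
  · rw [← h, ← hKAB, sup_eq_left.2 inf_le_right]
  · have hEK : E ≤ K := hEB.trans inf_le_left
    rcases hmax (A ⊔ E) (sup_normal A E) le_sup_left (sup_le hlt.le (hEB.trans inf_le_right))
      with h' | h'
    · exact Or.inl (le_antisymm (le_inf hEK (h' ▸ le_sup_right)) hAE)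
    · refine Or.inr (le_antisymm hEB (le_of_eq ?_))
      calc K ⊓ B = (E ⊔ A) ⊓ K := by rw [sup_comm, h', inf_comm]
        _ = E ⊔ A ⊓ K := sup_inf_assoc_of_coe_sup hEK (mul_normal E A)
        _ = E := sup_eq_left.2 (inf_comm A K ▸ hAE)

theorem inf_le_or_sup_inf_eq (hc : IsChiefFactorOf X A B) (K : Subgroup X) [K.Normal] :
    K ⊓ B ≤ A ∨ A ⊔ K ⊓ B = B := by
  have := hc.1
  have := hc.2.1
  exact (hc.2.2.2 (A ⊔ K ⊓ B) inferInstance le_sup_left (sup_le hc.le inf_le_right)).imp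
    (fun h => le_sup_right.trans h.le) id

end IsChiefFactorOf

theorem Nat.pow_or_not_dvd_of_dvd {p m n : ℕ} (hp : p.Prime) (hmn : m ∣ n)
    (hn : (∃ k, n = p ^ k) ∨ ¬ p ∣ n) : (∃ k, m = p ^ k) ∨ ¬ p ∣ m := by
  rcases hn with ⟨k, rfl⟩ | hn
  · obtain ⟨j, -, rfl⟩ := (Nat.dvd_prime_pow hp).1 hmn
    exact Or.inl ⟨j, rfl⟩
  · exact Or.inr fun hpm => hn (hpm.trans hmn)

namespace NormalChain

variable {X Y : Type u} [Group X] [Group Y] (S : NormalChain X)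

def map (f : X →* Y) (hf : Function.Surjective f) : NormalChain Y where
  len := S.len
  ser i := (S.ser i).map f
  mono _ _ hij := map_mono (S.mono hij)
  bot_eq := by rw [S.bot_eq, Subgroup.map_bot]
  top_eq := by rw [S.top_eq, map_top_of_surjective f hf]
  normal i := (S.normal i).map f hf

def subgroupOf (H : Subgroup X) : NormalChain H where
  len := S.len
  ser i := (S.ser i).subgroupOf H
  mono _ _ hij := comap_mono (S.mono hij)
  bot_eq := by rw [S.bot_eq, bot_subgroupOf]
  top_eq := by rw [S.top_eq, top_subgroupOf]
  normal i := (S.normal i).subgroupOf H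

theorem factorCard_map_dvd (f : X →* Y) (hf : Function.Surjective f) (i : Fin S.len) :
    (S.map f hf).factorCard i ∣ S.factorCard i := by
  have := S.normal i.castSucc
  unfold factorCard map
  rw [relIndex_map_map]
  exact relIndex_sup_sup_dvd (S.mono (Fin.castSucc_le_succ i))

theorem factorCard_subgroupOf_dvd (H : Subgroup X) (i : Fin S.len) :
    (S.subgroupOf H).factorCard i ∣ S.factorCard i := by
  have := S.normal i.castSucc
  unfold factorCard subgroupOf
  change ((S.ser i.castSucc).comap H.subtype).relIndex _ ∣ _
  rw [relIndex_comap, subgroupOf_map_subtype]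
  exact relIndex_dvd_relIndex_of_le_right inf_le_left

theorem exists_inf_eq_bot_and_ne_bot {N : Subgroup X} (hN : N ≠ ⊥) :
    ∃ i : Fin S.len, N ⊓ S.ser i.castSucc = ⊥ ∧ N ⊓ S.ser i.succ ≠ ⊥ := by
  by_contra! h
  have hall : ∀ i, N ⊓ S.ser i = ⊥ := Fin.induction (by rw [S.bot_eq, inf_bot_eq]) h
  exact hN (by simpa [S.top_eq] using hall (Fin.last S.len))

end NormalChain

namespace IsPSolvableGrp

variable {p : ℕ} {X Y : Type u} [Group X] [Group Y]

theorem of_surjective (hp : p.Prime) (hX : IsPSolvableGrp p X) (f : X →* Y)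
    (hf : Function.Surjective f) : IsPSolvableGrp p Y :=
  let ⟨S, hS⟩ := hX
  ⟨S.map f hf, fun i => Nat.pow_or_not_dvd_of_dvd hp (S.factorCard_map_dvd f hf i) (hS i)⟩

theorem subgroup (hp : p.Prime) (hX : IsPSolvableGrp p X) (H : Subgroup X) :
    IsPSolvableGrp p H :=
  let ⟨S, hS⟩ := hX
  ⟨S.subgroupOf H, fun i =>
    Nat.pow_or_not_dvd_of_dvd hp (S.factorCard_subgroupOf_dvd H i) (hS i)⟩

theorem card_of_minimal_normal (hp : p.Prime) (hX : IsPSolvableGrp p X) {N : Subgroup X}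
    (hN : Minimal (fun L : Subgroup X => L.Normal ∧ L ≠ ⊥) N) :
    (∃ k, Nat.card N = p ^ k) ∨ ¬ p ∣ Nat.card N := by
  obtain ⟨S, hS⟩ := hX
  obtain ⟨i, hbot, hne⟩ := S.exists_inf_eq_bot_and_ne_bot hN.prop.2
  have := hN.prop.1
  have := S.normal i.castSucc
  have := S.normal i.succ
  have hNi : N ≤ S.ser i.succ :=
    inf_eq_left.1 (hN.eq_of_le ⟨inferInstance, hne⟩ inf_le_left)
  exact Nat.pow_or_not_dvd_of_dvd hp (card_dvd_relIndex_of_inf_eq_bot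
    (S.mono (Fin.castSucc_le_succ i)) hNi (inf_comm N _ ▸ hbot)) (hS i)

end IsPSolvableGrp

section PSupersolvable

variable {p : ℕ} {X Y : Type u} [Group X] [Group Y]

theorem IsPSupersolvableGrp.of_subsingleton [Subsingleton X] : IsPSupersolvableGrp p X :=
  ⟨⟨⟨0, fun _ => ⊥, monotone_const, rfl, Subsingleton.elim _ _, fun _ => inferInstance⟩,
    fun i => i.elim0⟩, fun _ _ hc => absurd (Subsingleton.elim _ _) hc.2.2.1.ne⟩

theorem isPSupersolvableGrp_of_surjective_of_relIndex_eq {f : X →* Y}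
    (hf : Function.Surjective f) (hY : IsPSolvableGrp p Y)
    (h : ∀ A B, IsChiefFactorOf X A B → f.ker ≤ A → p ∣ A.relIndex B →
      A.relIndex B = p) :
    IsPSupersolvableGrp p Y := by
  refine ⟨hY, fun A B hc hdvd => ?_⟩
  have hidx : (A.comap f).relIndex (B.comap f) = A.relIndex B := by
    rw [relIndex_comap, map_comap_eq_self_of_surjective hf]
  rw [← hidx] at hdvd ⊢
  exact h _ _ (hc.comap_of_surjective hf) (ker_le_comap f A) hdvd

theorem IsPSupersolvableGrp.of_surjective (hp : p.Prime) (hX : IsPSupersolvableGrp p X)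
    (f : X →* Y) (hf : Function.Surjective f) : IsPSupersolvableGrp p Y :=
  isPSupersolvableGrp_of_surjective_of_relIndex_eq hf (hX.1.of_surjective hp f hf)
    fun A B hc _ => hX.2 A B hc

theorem IsPSupersolvableGrp.relIndex_eq_of_quotient {K : Subgroup X} [K.Normal]
    (hQ : IsPSupersolvableGrp p (X ⧸ K)) {A B : Subgroup X} (hc : IsChiefFactorOf X A B)
    (hKB : K ⊓ B ≤ A) (hdvd : p ∣ A.relIndex B) : A.relIndex B = p := by
  have := hc.1
  have hidx : ((A ⊔ K).map (QuotientGroup.mk' K)).relIndex ((B ⊔ K).map (QuotientGroup.mk' K))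
      = A.relIndex B := by
    rw [relIndex_map_map, QuotientGroup.ker_mk', sup_assoc, sup_idem, sup_assoc, sup_idem,
      relIndex_sup_sup_of_inf_le hc.le hKB]
  rw [← hidx] at hdvd ⊢
  exact hQ.2 _ _ ((hc.sup hKB).map_of_surjective (QuotientGroup.mk'_surjective K)
    ((QuotientGroup.ker_mk' K).trans_le le_sup_right)) hdvd

theorem IsPSupersolvableGrp.of_quotient_of_not_dvd_card (hX : IsPSolvableGrp p X)
    {K : Subgroup X} [K.Normal] (hK : ¬ p ∣ Nat.card K) (hQ : IsPSupersolvableGrp p (X ⧸ K)) :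
    IsPSupersolvableGrp p X := by
  refine ⟨hX, fun A B hc hdvd => (hc.inf_le_or_sup_inf_eq K).elim
    (fun hKB => hQ.relIndex_eq_of_quotient hc hKB hdvd) fun h => absurd ?_ hK⟩
  have := hc.1
  calc p ∣ A.relIndex B := hdvd
    _ = A.relIndex (K ⊓ B) := by rw [← relIndex_sup_right (K ⊓ B) A, sup_comm, h]
    _ ∣ Nat.card ↥(K ⊓ B) := relIndex_dvd_card _ _
    _ ∣ Nat.card K := card_dvd_of_le inf_le_left

theorem IsPSupersolvableGrp.quotient_of_sup_eq_top (hp : p.Prime) {M : Subgroup X}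
    (hM : IsPSupersolvableGrp p M) {N : Subgroup X} [N.Normal] (hNM : N ⊔ M = ⊤) :
    IsPSupersolvableGrp p (X ⧸ N) := by
  refine hM.of_surjective hp ((QuotientGroup.mk' N).comp M.subtype) ?_
  intro y
  obtain ⟨x, rfl⟩ := QuotientGroup.mk'_surjective N y
  have hx : x ∈ ((N ⊔ M : Subgroup X) : Set X) := hNM ▸ mem_top x
  rw [normal_mul] at hx
  obtain ⟨n, hn, m, hm, rfl⟩ := hx
  refine ⟨⟨m, hm⟩, ?_⟩
  simpa using hn

end PSupersolvable

instance groupResidual_normal (C : GroupClass.{u}) (X : Type u) [Group X] :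
    (groupResidual C X).Normal :=
  ⟨fun n hn g => mem_sInf.2 fun N hN => by
    obtain ⟨hNn, -⟩ := id hN
    exact hNn.conj_mem n (mem_sInf.1 hn N hN) g⟩

section Residual

variable {p : ℕ} {X Y : Type u} [Group X] [Group Y]

theorem quotientInClass_top : QuotientInClass (pSupersolvableClass p) (⊤ : Subgroup X) := by
  have := QuotientGroup.subsingleton_quotient_top (G := X)
  exact ⟨inferInstance, IsPSupersolvableGrp.of_subsingleton⟩

theorem QuotientInClass.inf (hp : p.Prime) (hX : IsPSolvableGrp p X) {K₁ K₂ : Subgroup X}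
    (h₁ : QuotientInClass (pSupersolvableClass p) K₁)
    (h₂ : QuotientInClass (pSupersolvableClass p) K₂) :
    QuotientInClass (pSupersolvableClass p) (K₁ ⊓ K₂) := by
  obtain ⟨_, hQ₁⟩ := h₁
  obtain ⟨_, hQ₂⟩ := h₂
  refine ⟨inferInstance, isPSupersolvableGrp_of_surjective_of_relIndex_eq
    (QuotientGroup.mk'_surjective _) (hX.of_surjective hp _ (QuotientGroup.mk'_surjective _))
    fun A B hc hker hdvd => ?_⟩
  rw [QuotientGroup.ker_mk'] at hker
  have := hc.1
  rcases hc.inf_le_or_sup_inf_eq K₁ with h | h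
  · exact hQ₁.relIndex_eq_of_quotient hc h hdvd
  · -- `K₁ ⊓ A < K₁ ⊓ B` is a chief factor of the same order, and `K₂` meets it inside `K₁ ⊓ A`
    rw [← relIndex_inf_inf_of_sup_eq hc.le h] at hdvd ⊢
    exact hQ₂.relIndex_eq_of_quotient (hc.inf h)
      (fun x hx => ⟨hx.2.1, hker ⟨hx.2.1, hx.1⟩⟩) hdvd

theorem quotientInClass_groupResidual [Finite X] (hp : p.Prime) (hX : IsPSolvableGrp p X) :
    QuotientInClass (pSupersolvableClass p) (groupResidual (pSupersolvableClass p) X) := by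
  obtain ⟨K, hK, hmin⟩ := Set.Finite.exists_minimalFor id
    {N : Subgroup X | QuotientInClass (pSupersolvableClass p) N} (Set.toFinite _)
    ⟨⊤, quotientInClass_top⟩
  suffices groupResidual (pSupersolvableClass p) X = K by rwa [this]
  exact le_antisymm (sInf_le hK)
    (le_sInf fun N hN => (hmin (hK.inf hp hX hN) inf_le_left).trans inf_le_right)

theorem groupResidual_eq_bot_iff [Finite X] (hp : p.Prime) (hX : IsPSolvableGrp p X) :
    groupResidual (pSupersolvableClass p) X = ⊥ ↔ IsPSupersolvableGrp p X := by
  refine ⟨fun h => ?_, fun h => le_bot_iff.1 (sInf_le ⟨inferInstance,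
    h.of_surjective hp QuotientGroup.quotientBot.symm.toMonoidHom (MulEquiv.surjective _)⟩)⟩
  obtain ⟨_, hQ⟩ := h ▸ quotientInClass_groupResidual hp hX
  exact hQ.of_surjective hp QuotientGroup.quotientBot.toMonoidHom (MulEquiv.surjective _)

theorem QuotientInClass.comap (hp : p.Prime) {f : X →* Y} (hf : Function.Surjective f)
    {N : Subgroup Y} (hN : QuotientInClass (pSupersolvableClass p) N) :
    QuotientInClass (pSupersolvableClass p) (N.comap f) := by
  obtain ⟨_, hQ⟩ := hN
  have hker : ((QuotientGroup.mk' N).comp f).ker = N.comap f := by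
    rw [← MonoidHom.comap_ker, QuotientGroup.ker_mk']
  let e : X ⧸ N.comap f ≃* Y ⧸ N := (QuotientGroup.quotientMulEquivOfEq hker).symm.trans
    (QuotientGroup.quotientKerEquivOfSurjective _ ((QuotientGroup.mk'_surjective N).comp hf))
  exact ⟨inferInstance, hQ.of_surjective hp e.symm.toMonoidHom e.symm.surjective⟩

theorem map_groupResidual_of_surjective [Finite X] (hp : p.Prime) (hX : IsPSolvableGrp p X)
    {f : X →* Y} (hf : Function.Surjective f) :
    (groupResidual (pSupersolvableClass p) X).map f = groupResidual (pSupersolvableClass p) Y := by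
  refine le_antisymm (le_sInf fun N hN => map_le_iff_le_comap.2 (sInf_le (hN.comap hp hf)))
    (sInf_le ?_)
  obtain ⟨_, hQ⟩ := quotientInClass_groupResidual hp hX
  have := (groupResidual_normal (pSupersolvableClass p) X).map f hf
  exact ⟨this, hQ.of_surjective hp _ (QuotientGroup.map_surjective_of_surjective _ _ f
    ((QuotientGroup.mk'_surjective _).comp hf) (le_comap_map f _))⟩

theorem map_residualIn [Finite X] (hp : p.Prime) (hX : IsPSolvableGrp p X) (f : X →* Y)
    (T : Subgroup X) :
    (residualIn (pSupersolvableClass p) T).map f =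
      residualIn (pSupersolvableClass p) (T.map f) := by
  rw [residualIn, residualIn, ← map_groupResidual_of_surjective hp (hX.subgroup hp T)
    (f.subgroupMap_surjective T), map_map, map_map]
  rfl

end Residual

section PGroup

variable {p : ℕ} {X : Type u} [Group X]

theorem isPGroup_of_forall_pow_mem {R N : Subgroup X} (hN : IsPGroup p N)
    (h : ∀ x ∈ R, ∃ k, x ^ p ^ k ∈ N) : IsPGroup p R := by
  rintro ⟨x, hx⟩
  obtain ⟨k, hk⟩ := h x hx
  obtain ⟨m, hm⟩ := hN ⟨_, hk⟩
  refine ⟨k + m, Subtype.ext ?_⟩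
  simpa [pow_add, pow_mul] using congrArg Subtype.val hm

theorem forall_exists_pow_mem_inf {R N L : Subgroup X} (hN : ∀ x ∈ R, ∃ k, x ^ p ^ k ∈ N)
    (hL : ∀ x ∈ R, ∃ k, x ^ p ^ k ∈ L) : ∀ x ∈ R, ∃ k, x ^ p ^ k ∈ N ⊓ L := by
  intro x hx
  obtain ⟨a, ha⟩ := hN x hx
  obtain ⟨b, hb⟩ := hL x hx
  refine ⟨a + b, ?_, ?_⟩
  · rw [pow_add, pow_mul]
    exact pow_mem ha _
  · rw [pow_add, mul_comm, pow_mul]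
    exact pow_mem hb _

theorem exists_relIndex_eq_pow_of_forall_pow_mem [Finite X] [Fact p.Prime] {R N : Subgroup X}
    [N.Normal] (h : ∀ x ∈ R, ∃ k, x ^ p ^ k ∈ N) : ∃ k, N.relIndex R = p ^ k := by
  refine IsPGroup.iff_card.1 fun g => ?_
  induction g using QuotientGroup.induction_on with | H x => ?_
  obtain ⟨k, hk⟩ := h x x.2
  exact ⟨k, (QuotientGroup.eq_one_iff _).2 (by simpa [mem_subgroupOf] using hk)⟩

theorem Sylow.sup_map_subtype_eq_of_relIndex_eq_pow [Finite X] [Fact p.Prime] {R N : Subgroup X}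
    (P : Sylow p R) (hNR : N ≤ R) {k : ℕ} (hk : N.relIndex R = p ^ k) :
    N ⊔ (P : Subgroup R).map R.subtype = R := by
  set Q := (P : Subgroup R).map R.subtype
  have hQ : Q.relIndex R = (P : Subgroup R).index := by
    rw [← relIndex_top_right, ← relIndex_map_map_of_injective _ _ R.subtype_injective,
      ← MonoidHom.range_eq_map, range_subtype]
  obtain ⟨j, -, hj⟩ := (Nat.dvd_prime_pow Fact.out).1
    (hk ▸ relIndex_dvd_of_le_left R (le_sup_left : N ≤ N ⊔ Q))
  have hj0 : j = 0 := by
    by_contra hj0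
    refine P.not_dvd_index (hQ ▸ ?_)
    exact (dvd_pow_self p hj0).trans (hj ▸ relIndex_dvd_of_le_left R le_sup_right)
  rw [hj0, pow_zero, relIndex_eq_one] at hj
  exact le_antisymm (sup_le hNR (map_subtype_le _)) hj

end PGroup

section Main

variable {p : ℕ} {X Y : Type u} [Group X] [Group Y]

theorem residualIn_normal_of_surjective [Finite X] (hp : p.Prime) (hX : IsPSolvableGrp p X)
    (hres : ∀ S : Subgroup X, (residualIn (pSupersolvableClass p) S).Normal) {f : X →* Y}
    (hf : Function.Surjective f) (S : Subgroup Y) :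
    (residualIn (pSupersolvableClass p) S).Normal := by
  rw [← map_comap_eq_self_of_surjective hf S, ← map_residualIn hp hX]
  exact (hres _).map f hf

theorem exists_pow_mem_of_isPGroup_groupResidual_quotient [Finite X] (hp : p.Prime)
    (hX : IsPSolvableGrp p X) {N : Subgroup X} [N.Normal]
    (h : IsPGroup p (groupResidual (pSupersolvableClass p) (X ⧸ N))) :
    ∀ x ∈ groupResidual (pSupersolvableClass p) X, ∃ k, x ^ p ^ k ∈ N := by
  intro x hx
  have hmem : (x : X ⧸ N) ∈ groupResidual (pSupersolvableClass p) (X ⧸ N) :=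
    map_groupResidual_of_surjective hp hX (QuotientGroup.mk'_surjective N) ▸ mem_map_of_mem _ hx
  obtain ⟨k, hk⟩ := h ⟨_, hmem⟩
  exact ⟨k, (QuotientGroup.eq_one_iff _).1 (by simpa using congrArg Subtype.val hk)⟩

theorem groupResidual_eq_bot_of_unique_minimal_normal [Finite X] (hp : p.Prime)
    (hX : IsPSolvableGrp p X)
    (hres : ∀ S : Subgroup X, (residualIn (pSupersolvableClass p) S).Normal)
    {N : Subgroup X} [N.Normal] (hNbot : N ≠ ⊥) (hN : ¬ p ∣ Nat.card N)
    (huniq : ∀ L : Subgroup X, L.Normal → L ≠ ⊥ → N ≤ L)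
    (hRN : ∀ x ∈ groupResidual (pSupersolvableClass p) X, ∃ k, x ^ p ^ k ∈ N) :
    groupResidual (pSupersolvableClass p) X = ⊥ := by
  set R := groupResidual (pSupersolvableClass p) X
  have := Fact.mk hp
  by_contra hR
  suffices hQ : IsPSupersolvableGrp p (X ⧸ N) from
    hR ((groupResidual_eq_bot_iff hp hX).2 (hQ.of_quotient_of_not_dvd_card hX hN))
  obtain ⟨k, hk⟩ := exists_relIndex_eq_pow_of_forall_pow_mem hRN
  obtain ⟨P⟩ : Nonempty (Sylow p R) := inferInstance
  set Q := (P : Subgroup R).map R.subtype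
  have hNQ : N ⊔ Q = R := P.sup_map_subtype_eq_of_relIndex_eq_pow (huniq R inferInstance hR) hk
  set M := normalizer (Q : Set X)
  have hNM : N ⊔ M = ⊤ :=
    calc N ⊔ M = N ⊔ (Q ⊔ M) := by rw [sup_eq_right.2 le_normalizer]
      _ = M ⊔ R := by rw [← hNQ, ← sup_assoc, sup_comm]
      _ = ⊤ := Sylow.normalizer_sup_eq_top P
  by_cases hM : M = ⊤
  · have hQ : Q = ⊥ := by
      by_contra hQ
      have hNQle := huniq Q (normalizer_eq_top_iff.1 hM) hQ
      exact hNbot (card_eq_one.1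
        (((P.isPGroup'.map R.subtype).to_le hNQle).card_eq_or_dvd.resolve_right hN))
    obtain ⟨_, hRq⟩ := quotientInClass_groupResidual hp hX
    have hRN : R = N := by rw [← hNQ, hQ, sup_bot_eq]
    exact hRN ▸ hRq
  · have hNM' : ¬ N ≤ M := fun h => hM (by rwa [sup_eq_right.2 h] at hNM)
    have hresM : residualIn (pSupersolvableClass p) M = ⊥ := by
      by_contra h
      exact hNM' ((huniq _ (hres _) h).trans (map_subtype_le _))
    have hMpss := (groupResidual_eq_bot_iff hp (hX.subgroup hp _)).1
      ((map_eq_bot_iff_of_injective _ (subtype_injective _)).1 hresM)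
    exact hMpss.quotient_of_sup_eq_top hp hNM

theorem isPGroup_groupResidual_of_forall_residualIn_normal [Finite X] (hp : p.Prime)
    (hX : IsPSolvableGrp p X)
    (hres : ∀ S : Subgroup X, (residualIn (pSupersolvableClass p) S).Normal) :
    IsPGroup p (groupResidual (pSupersolvableClass p) X) := by
  induction hn : Nat.card X using Nat.strong_induction_on generalizing X with | _ n ih => ?_
  set R := groupResidual (pSupersolvableClass p) X
  by_cases hR : R = ⊥
  · rw [hR]
    exact IsPGroup.of_bot
  have hquot (N : Subgroup X) [N.Normal] (hN : N ≠ ⊥) : ∀ x ∈ R, ∃ k, x ^ p ^ k ∈ N := by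
    have hlt : Nat.card (X ⧸ N) < n := by
      rw [← hn, ← N.card_mul_index]
      exact lt_mul_left Nat.card_pos ((one_lt_card_iff_ne_bot N).2 hN)
    exact exists_pow_mem_of_isPGroup_groupResidual_quotient hp hX (ih _ hlt
      (hX.of_surjective hp _ (QuotientGroup.mk'_surjective N))
      (residualIn_normal_of_surjective hp hX hres (QuotientGroup.mk'_surjective N)) rfl)
  obtain ⟨N, -, hN⟩ := exists_minimal_le_of_wellFoundedLT
    (fun L : Subgroup X => L.Normal ∧ L ≠ ⊥) R ⟨inferInstance, hR⟩
  have := hN.prop.1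
  rcases hX.card_of_minimal_normal hp hN with ⟨k, hk⟩ | hpN
  · exact isPGroup_of_forall_pow_mem (IsPGroup.of_card hk) (hquot N hN.prop.2)
  by_cases huniq : ∀ L : Subgroup X, L.Normal → L ≠ ⊥ → N ≤ L
  · exact absurd (groupResidual_eq_bot_of_unique_minimal_normal hp hX hres hN.prop.2 hpN huniq
      (hquot N hN.prop.2)) hR
  simp only [not_forall] at huniq
  obtain ⟨L, hL, hLbot, hNL⟩ := huniq
  have hNLbot : N ⊓ L = ⊥ := by
    by_contra h
    exact hNL ((hN.eq_of_le ⟨normal_inf_normal N L, h⟩ inf_le_left) ▸ inf_le_right)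
  exact isPGroup_of_forall_pow_mem (hNLbot ▸ IsPGroup.of_bot)
    (forall_exists_pow_mem_inf (hquot N hN.prop.2) (hquot L hLbot))

end Main

/-- Let `G` be a finite `p`-solvable group.  Then the `𝒰_p`-residual of
`N_{𝒰_p}(G)` is a `p`-group. -/
theorem residual_of_norm_isPGroup
    {G : Type u} [Group G] [Finite G] {p : ℕ} (hp : p.Prime)
    (hG : IsPSolvableGrp p G) :
    IsPGroup p
      ↥(residualIn (pSupersolvableClass p) (grpNorm (pSupersolvableClass p) G)) := by
  set D := grpNorm (pSupersolvableClass p) G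
  have hD : IsPSolvableGrp p D := hG.subgroup hp D
  have hres : ∀ S : Subgroup D, (residualIn (pSupersolvableClass p) S).Normal := fun S => by
    have hle : D ≤ normalizer (residualIn (pSupersolvableClass p) (S.map D.subtype) : Set G) :=
      iInf_le_of_le (S.map D.subtype) (iInf_le _ le_top)
    rw [← map_residualIn hp hD] at hle
    rw [← comap_map_eq_self_of_injective D.subtype_injective (residualIn _ S)]
    exact (normal_subgroupOf_iff_le_normalizer (map_subtype_le _)).2 hle
  exact (isPGroup_groupResidual_of_forall_residualIn_normal hp hD hres).map D.subtype
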